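/- arXiv:2411.00559 — 5 statements merged into one kernel-verified Lean document; each statement's English description precedes it below -/
import Mathlib

section
/- Under this setup, the lower endpoint of the Hoeffding interval is at most the lower endpoint of the DKW interval: x̄ − χ(b−a) ≤ (1/k)·( (∑_{i=0}^{k−m−2} x_i) + (m+1−χk)·x_{k−m−1} + χk·a ), i.e. l_h ≤ l_d. -/
open Finset

/-- The lower endpoint of the Hoeffding interval is at most the lower endpoint of the
DKW interval: `l_h ≤ l_d`. -/
theorem hoeffding_lower_le_dkw_lower
    (k : ℕ) (hk : 1 ≤ k) (a b : ℝ) (hab : a ≤ b)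
    (x : Fin k → ℝ) (hmono : Monotone x)
    (hxa : ∀ i, a ≤ x i) (hxb : ∀ i, x i ≤ b)
    (χ : ℝ) (hχ : 0 ≤ χ)
    (m : ℕ) (hm : m = ⌊χ * k⌋₊) (hmk : m + 1 ≤ k) :
    (1 / (k : ℝ)) * (∑ i : Fin k, x i) - χ * (b - a) ≤
      (1 / (k : ℝ)) *
        ((∑ i ∈ Finset.univ.filter (fun i : Fin k => (i : ℕ) < k - m - 1), x i)
          + ((m : ℝ) + 1 - χ * k) * x ⟨k - m - 1, by omega⟩ + χ * k * a) := by
  have hk0 : (0 : ℝ) < k := by exact_mod_cast Nat.lt_of_lt_of_le Nat.zero_lt_one hk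
  set jf : Fin k := ⟨k - m - 1, by omega⟩ with hjf
  -- floor facts
  have hmle : (m : ℝ) ≤ χ * k := by
    rw [hm]; exact Nat.floor_le (by positivity)
  have hmlt : χ * k < (m : ℝ) + 1 := by
    rw [hm]; exact_mod_cast Nat.lt_floor_add_one (χ * k)
  -- the filter sets are intervals
  have hIio : Finset.univ.filter (fun i : Fin k => (i : ℕ) < k - m - 1) = Finset.Iio jf := by
    ext i; simp [Fin.lt_def, hjf]
  have hIci : Finset.univ.filter (fun i : Fin k => ¬ (i : ℕ) < k - m - 1) = Finset.Ici jf := by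
    ext i; simp [Fin.le_def, hjf, not_lt]
  have hsplit : (∑ i : Fin k, x i) =
      (∑ i ∈ Finset.Iio jf, x i) + (∑ i ∈ Finset.Ici jf, x i) := by
    rw [← hIio, ← hIci, Finset.sum_filter_add_sum_filter_not]
  have hIcisum : (∑ i ∈ Finset.Ici jf, x i) = x jf + ∑ i ∈ Finset.Ioi jf, x i := by
    rw [← Finset.Ioi_insert, Finset.sum_insert Finset.notMem_Ioi_self]
  have hcard : (Finset.Ioi jf).card = m := by
    rw [Fin.card_Ioi]; simp [hjf]; omega
  have htail : (∑ i ∈ Finset.Ioi jf, x i) ≤ (m : ℝ) * b := by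
    calc (∑ i ∈ Finset.Ioi jf, x i) ≤ ∑ _i ∈ Finset.Ioi jf, b :=
          Finset.sum_le_sum fun i _ => hxb i
      _ = (m : ℝ) * b := by rw [Finset.sum_const, hcard, nsmul_eq_mul]
  have hxjb : x jf ≤ b := hxb jf
  rw [hIio]
  have key : (∑ i : Fin k, x i) - χ * k * (b - a) ≤
      (∑ i ∈ Finset.Iio jf, x i) + ((m : ℝ) + 1 - χ * k) * x jf + χ * k * a := by
    rw [hsplit, hIcisum]
    nlinarith [mul_nonneg (sub_nonneg.2 hmle) (sub_nonneg.2 hxjb),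
      mul_nonneg (sub_nonneg.2 hxjb) (sub_nonneg.2 hmle)]
  have := mul_le_mul_of_nonneg_left key (le_of_lt (one_div_pos.2 hk0))
  calc (1 / (k : ℝ)) * (∑ i : Fin k, x i) - χ * (b - a)
      = (1 / (k : ℝ)) * ((∑ i : Fin k, x i) - χ * k * (b - a)) := by
        field_simp
    _ ≤ _ := this
end

section
/- Under this setup, the upper endpoint of the DKW interval is at most the upper endpoint of the Hoeffding interval: (1/k)·( χk·b + (m+1−χk)·x_m + ∑_{i=m+1}^{k−1} x_i ) ≤ x̄ + χ(b−a), i.e. u_d ≤ u_h. -/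
open Finset

/-- The upper endpoint of the DKW interval is at most the upper endpoint of the
Hoeffding interval: `u_d ≤ u_h`. -/
theorem dkw_upper_le_hoeffding_upper
    (k : ℕ) (hk : 1 ≤ k) (a b : ℝ) (hab : a ≤ b)
    (x : Fin k → ℝ) (hmono : Monotone x)
    (hxa : ∀ i, a ≤ x i) (hxb : ∀ i, x i ≤ b)
    (χ : ℝ) (hχ : 0 ≤ χ)
    (m : ℕ) (hm : m = ⌊χ * k⌋₊) (hmk : m + 1 ≤ k) :
    (1 / (k : ℝ)) *
        (χ * k * b + ((m : ℝ) + 1 - χ * k) * x ⟨m, by omega⟩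
          + ∑ i ∈ Finset.univ.filter (fun i : Fin k => m < (i : ℕ)), x i) ≤
      (1 / (k : ℝ)) * (∑ i : Fin k, x i) + χ * (b - a) := by
  have hk0 : (0:ℝ) < k := by exact_mod_cast hk
  have hc1 : (m:ℝ) ≤ χ * k := by
    rw [hm]; exact Nat.floor_le (by positivity)
  have hc2 : χ * k < (m:ℝ) + 1 := by
    rw [hm]; exact_mod_cast Nat.lt_floor_add_one (χ * k)
  have hrw : (1 / (k : ℝ)) * (∑ i : Fin k, x i) + χ * (b - a)
      = (1 / (k : ℝ)) * ((∑ i : Fin k, x i) + χ * (b - a) * k) := by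
    field_simp
  rw [hrw]
  apply mul_le_mul_of_nonneg_left _ (by positivity)
  have hsplit := Finset.sum_filter_add_sum_filter_not Finset.univ
    (fun i : Fin k => m < (i : ℕ)) x
  set mM : Fin k := ⟨m, by omega⟩ with hmM
  have hS : Finset.univ.filter (fun i : Fin k => ¬ m < (i : ℕ))
      = insert mM (Finset.univ.filter (fun i : Fin k => (i : ℕ) < m)) := by
    ext i
    simp [Fin.ext_iff, hmM]
    omega
  have hnotmem : mM ∉ Finset.univ.filter (fun i : Fin k => (i : ℕ) < m) := by
    simp [hmM]
  have hcard : (Finset.univ.filter (fun i : Fin k => (i : ℕ) < m)).card = m := by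
    have : Finset.univ.filter (fun i : Fin k => (i : ℕ) < m) = Finset.Iio mM := by
      ext i
      simp [Fin.lt_def, hmM]
    rw [this, Fin.card_Iio]
  have hsumT : (m : ℝ) * a ≤ ∑ i ∈ Finset.univ.filter (fun i : Fin k => (i : ℕ) < m), x i := by
    have := Finset.card_nsmul_le_sum
      (Finset.univ.filter (fun i : Fin k => (i : ℕ) < m)) x a (fun i _ => hxa i)
    rw [hcard] at this
    simpa [nsmul_eq_mul] using this
  have hSsum : ∑ i ∈ Finset.univ.filter (fun i : Fin k => ¬ m < (i : ℕ)), x i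
      = x mM + ∑ i ∈ Finset.univ.filter (fun i : Fin k => (i : ℕ) < m), x i := by
    rw [hS, Finset.sum_insert hnotmem]
  rw [← hsplit, hSsum] at *
  nlinarith [hxa mM, hxb mM, hsumT, hc1, hc2]
end

section
/- For every natural number q, the integral of X over the event {T ≥ q} satisfies ∫_{{ω : T(ω) ≥ q}} X dℙ ≤ r·(1−p)^q·(q·p + 1)/p (as a Lebesgue lower integral in ℝ≥0∞, with the right-hand side coerced from the reals). -/
open MeasureTheory ENNReal

/-!
Since `X ≤ r (T + 1)`, it suffices to bound `∫_{T ≥ q} (T + 1) dℙ`. For an `ℕ`-valued `T` this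
integral is `∑ⱼ ℙ(T ≥ j, T ≥ q) = ∑ⱼ ℙ(T ≥ max q j) ≤ ∑ⱼ (1 - p)^(max q j)`, and the last sum
is `q (1 - p)^q` for `j < q` plus a geometric series `(1 - p)^q / p`.
-/

theorem ENNReal.tsum_ite_le_eq_add_one (n : ℕ) :
    ∑' j : ℕ, (if j ≤ n then 1 else 0 : ℝ≥0∞) = n + 1 := by
  rw [tsum_eq_sum (s := Finset.range (n + 1)) fun j hj => by simp_all,
    Finset.sum_ite_of_true fun j hj => Nat.lt_succ_iff.mp (Finset.mem_range.mp hj)]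
  simp

theorem lintegral_natCast_add_one_eq_tsum {Ω : Type*} [MeasurableSpace Ω]
    (μ : Measure Ω) {T : Ω → ℕ} (hT : Measurable T) :
    ∫⁻ ω, ((T ω : ℝ≥0∞) + 1) ∂μ = ∑' j : ℕ, μ {ω | j ≤ T ω} := by
  have hmeas (j : ℕ) : MeasurableSet {ω | j ≤ T ω} := measurableSet_le measurable_const hT
  calc ∫⁻ ω, ((T ω : ℝ≥0∞) + 1) ∂μ
      = ∫⁻ ω, ∑' j : ℕ, {ω | j ≤ T ω}.indicator 1 ω ∂μ := by
        simp only [Set.indicator_apply, Set.mem_ofPred_eq, Pi.one_apply,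
          ENNReal.tsum_ite_le_eq_add_one]
    _ = ∑' j : ℕ, μ {ω | j ≤ T ω} := by
        rw [lintegral_tsum fun j => (measurable_one.indicator (hmeas j)).aemeasurable]
        simp only [lintegral_indicator_one (hmeas _)]

theorem ENNReal.tsum_pow_max_eq (a : ℝ≥0∞) (q : ℕ) :
    ∑' j : ℕ, a ^ max q j = a ^ q * (q + (1 - a)⁻¹) := by
  rw [← ENNReal.summable.sum_add_tsum_nat_add' (k := q)]
  have hhead : ∑ j ∈ Finset.range q, a ^ max q j = q * a ^ q := by
    rw [Finset.sum_congr rfl fun j hj => by rw [max_eq_left (Finset.mem_range.mp hj).le]]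
    simp
  have htail : ∑' j : ℕ, a ^ max q (j + q) = a ^ q * (1 - a)⁻¹ := by
    simp only [max_eq_right (Nat.le_add_left q _), pow_add]
    rw [ENNReal.tsum_mul_right, ENNReal.tsum_geometric, mul_comm]
  rw [hhead, htail, mul_add, mul_comm]

theorem integral_tail_reward_bound_general
    {Ω : Type*} [MeasurableSpace Ω] (P : Measure Ω)
    (T : Ω → ℕ) (hT : Measurable T)
    (p : ℝ) (hp0 : 0 < p) (hp1 : p ≤ 1)
    (htail : ∀ j : ℕ, P {ω | j ≤ T ω} ≤ ENNReal.ofReal ((1 - p) ^ j))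
    (r : ℝ)
    (X : Ω → ℝ≥0∞)
    (hXb : ∀ ω, X ω ≤ ENNReal.ofReal r * ((T ω : ℝ≥0∞) + 1))
    (q : ℕ) :
    ∫⁻ ω in {ω | q ≤ T ω}, X ω ∂P
      ≤ ENNReal.ofReal (r * ((1 - p) ^ q * ((q : ℝ) * p + 1) / p)) := by
  have h1p : 0 ≤ 1 - p := by linarith
  have hrestrict (j : ℕ) :
      P.restrict {ω | q ≤ T ω} {ω | j ≤ T ω} ≤ ENNReal.ofReal (1 - p) ^ max q j := by
    rw [Measure.restrict_apply (measurableSet_le measurable_const hT), ← ENNReal.ofReal_pow h1p]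
    refine (measure_mono ?_).trans (htail (max q j))
    exact fun ω ⟨hj, hq⟩ => show max q j ≤ T ω from max_le hq hj
  have hgeom : 1 - ENNReal.ofReal (1 - p) = ENNReal.ofReal p := by
    rw [← ENNReal.ofReal_one, ← ENNReal.ofReal_sub _ h1p, _root_.sub_sub_cancel]
  calc ∫⁻ ω in {ω | q ≤ T ω}, X ω ∂P
      ≤ ∫⁻ ω in {ω | q ≤ T ω}, ENNReal.ofReal r * ((T ω : ℝ≥0∞) + 1) ∂P := lintegral_mono hXb
    _ = ENNReal.ofReal r * ∑' j : ℕ, P.restrict {ω | q ≤ T ω} {ω | j ≤ T ω} := by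
        rw [lintegral_const_mul _ (by fun_prop),
          lintegral_natCast_add_one_eq_tsum _ hT]
    _ ≤ ENNReal.ofReal r * ∑' j : ℕ, ENNReal.ofReal (1 - p) ^ max q j := by
        gcongr with j
        exact hrestrict j
    _ = ENNReal.ofReal (r * ((1 - p) ^ q * ((q : ℝ) * p + 1) / p)) := by
        rw [ENNReal.tsum_pow_max_eq, hgeom, ← ENNReal.ofReal_inv_of_pos hp0,
          ← ENNReal.ofReal_natCast,
          ← ENNReal.ofReal_add (by positivity) (by positivity), ← ENNReal.ofReal_pow h1p,
          ← ENNReal.ofReal_mul (by positivity), ← ENNReal.ofReal_mul' (by positivity)]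
        congr 1
        field_simp

/-- If `T` counts episodes with geometric tail bound `ℙ(T ≥ j) ≤ (1−p)^j` and the
reward `X` satisfies `X ≤ r·(T+1)`, then for every `q` the integral of `X` over the
event `{T ≥ q}` is at most `r·(1−p)^q·(q·p+1)/p`. -/
theorem integral_tail_reward_bound
    {Ω : Type*} [MeasurableSpace Ω] (P : Measure Ω) [IsProbabilityMeasure P]
    (T : Ω → ℕ) (hT : Measurable T)
    (p : ℝ) (hp0 : 0 < p) (hp1 : p ≤ 1)
    (htail : ∀ j : ℕ, P {ω | j ≤ T ω} ≤ ENNReal.ofReal ((1 - p) ^ j))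
    (r : ℝ) (hr : 0 ≤ r)
    (X : Ω → ℝ≥0∞) (hX : Measurable X)
    (hXb : ∀ ω, X ω ≤ ENNReal.ofReal r * ((T ω : ℝ≥0∞) + 1))
    (q : ℕ) :
    ∫⁻ ω in {ω | q ≤ T ω}, X ω ∂P
      ≤ ENNReal.ofReal (r * ((1 - p) ^ q * ((q : ℝ) * p + 1) / p)) :=
  integral_tail_reward_bound_general P T hT p hp0 hp1 htail r X hXb q
end

section
/- If F(x) ≤ G(x) + χ for every x ≥ 0, then the lower-band survival integral is a lower bound on the mean: ∫_{(0,∞)} (1 − min(G(x)+χ, 1)) dx ≤ ∫ x dμ(x), where both sides are interpreted as Lebesgue lower integrals in ℝ≥0∞ (the left with respect to Lebesgue measure on (0,∞) of the nonnegative integrand, the right as ∫⁻ ENNReal.ofReal x dμ). -/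
open MeasureTheory ENNReal

/-- If the cdf `F` of a nonnegative-supported probability measure `μ` satisfies
`F ≤ G + χ` on `[0,∞)`, then the survival integral of the upper boundary
`min(G+χ, 1)` of the DKW band is a lower bound on the mean of `μ`. -/
theorem dkw_lower_band_le_mean
    (μ : Measure ℝ) [IsProbabilityMeasure μ] (hμ : μ (Set.Iio 0) = 0)
    (F : ℝ → ℝ) (hF : ∀ x, F x = (μ (Set.Iic x)).toReal)
    (χ : ℝ) (hχ : 0 ≤ χ) (G : ℝ → ℝ)
    (hband : ∀ x : ℝ, 0 ≤ x → F x ≤ G x + χ) :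
    (∫⁻ x in Set.Ioi (0 : ℝ), ENNReal.ofReal (1 - min (G x + χ) 1))
      ≤ ∫⁻ x, ENNReal.ofReal x ∂μ := by
  have hnn : 0 ≤ᵐ[μ] (fun x : ℝ => x) := by
    rw [Filter.EventuallyLE, ae_iff]
    simpa [Set.Iio] using hμ
  rw [lintegral_eq_lintegral_meas_lt μ hnn aemeasurable_id]
  refine setLIntegral_mono' measurableSet_Ioi fun t ht => ?_
  have ht' : (0 : ℝ) ≤ t := le_of_lt ht
  -- μ {a | t < a} = μ (Ioi t)
  have key : ENNReal.ofReal (1 - F t) ≤ μ (Set.Ioi t) := by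
    have hIic : μ (Set.Iic t) ≠ ⊤ := measure_ne_top μ _
    have hsum : μ (Set.Iic t) + μ (Set.Ioi t) = 1 := by
      rw [← measure_union (by simp [Set.disjoint_left]) measurableSet_Ioi]
      simp [Set.Iic_union_Ioi]
    have : μ (Set.Ioi t) = 1 - μ (Set.Iic t) := by
      rw [← hsum]; rw [ENNReal.add_sub_cancel_left hIic]
    rw [this, hF]
    rw [← ENNReal.ofReal_one, ← ENNReal.ofReal_toReal hIic,
      ← ENNReal.ofReal_sub _ ENNReal.toReal_nonneg]
    simp
  refine le_trans ?_ key
  apply ENNReal.ofReal_le_ofReal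
  have hFle : F t ≤ min (G t + χ) 1 := by
    refine le_min (hband t ht') ?_
    rw [hF]
    exact (ENNReal.toReal_le_toReal (measure_ne_top μ _) one_ne_top).mpr
      (by simpa using prob_le_one)
  linarith
end

section
/- For every ε > 0 there exists k₀ ∈ ℕ such that for every k ≥ k₀ and every monotone function G : ℝ → ℝ with 0 ≤ G(x) ≤ 1 for all x, G(x) = 0 for all x < 0, and sup_{x∈ℝ} |G(x) − F(x)| ≤ χ_k, the lower-band survival integral L = ∫_{(0,∞)} (1 − min(G(x)+χ_k, 1)) dx satisfies M − ε ≤ L ≤ M. -/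
/-!
By the layer-cake formula, `M = ∫₀^∞ S` for the survival function `S t = μ (t, ∞) = 1 - F t`.
On the DKW event the integrand `1 - min (G + χ) 1` of `L` lies between `S - 2χ` and `S`, which gives
`L ≤ M` at once. For the lower bound, cut the integral at a point `T` beyond which `S` has mass at
most `ε / 2`; on `(0, T]` the loss is at most `2χT`, which is below `ε / 2` for large `k` since `χ_k → 0`.
-/

open MeasureTheory Set Filter Topology

lemma integrableOn_measureReal_Ioi {μ : Measure ℝ} (hnonneg : ∀ᵐ x ∂μ, 0 ≤ x)
    (hint : Integrable (fun x : ℝ => x) μ) :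
    IntegrableOn (fun t => μ.real (Ioi t)) (Ioi 0) := by
  have hanti : Antitone fun t : ℝ => μ (Ioi t) := fun _ _ hst => measure_mono (Ioi_subset_Ioi hst)
  refine integrable_toReal_of_lintegral_ne_top hanti.measurable.aemeasurable ?_
  have hlayer := lintegral_eq_lintegral_meas_lt μ hnonneg aemeasurable_id
  exact hlayer ▸ hint.lintegral_lt_top.ne

lemma exists_integral_Ioi_sub_le_intervalIntegral {f : ℝ → ℝ} (hf : IntegrableOn f (Ioi 0))
    {ε : ℝ} (hε : 0 < ε) : ∃ T ≥ 0, (∫ x in Ioi 0, f x) - ε ≤ ∫ x in 0..T, f x := by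
  have hlim := intervalIntegral_tendsto_integral_Ioi 0 hf tendsto_id
  have hclose := hlim.eventually (le_mem_nhds (sub_lt_self _ hε))
  obtain ⟨T, hT, hT0⟩ := (hclose.and (eventually_ge_atTop 0)).exists
  exact ⟨T, hT0, hT⟩

lemma intervalIntegral_sub_mul_le_integral_Ioi {f g : ℝ → ℝ} {η T : ℝ}
    (hf : IntegrableOn f (Ioi 0)) (hg : IntegrableOn g (Ioi 0)) (hg0 : ∀ x, 0 ≤ g x)
    (hfg : ∀ x, f x - η ≤ g x) (hT : 0 ≤ T) :
    (∫ x in 0..T, f x) - η * T ≤ ∫ x in Ioi 0, g x := by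
  have hIoc : Ioc 0 T ⊆ Ioi (0 : ℝ) := Ioc_subset_Ioi_self
  have hfT : IntervalIntegrable f volume 0 T :=
    (intervalIntegrable_iff_integrableOn_Ioc_of_le hT).2 (hf.mono_set hIoc)
  have hgT : IntervalIntegrable g volume 0 T :=
    (intervalIntegrable_iff_integrableOn_Ioc_of_le hT).2 (hg.mono_set hIoc)
  calc (∫ x in 0..T, f x) - η * T = ∫ x in 0..T, (f x - η) := by
        rw [intervalIntegral.integral_sub hfT intervalIntegrable_const,
          intervalIntegral.integral_const, smul_eq_mul, sub_zero, mul_comm]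
    _ ≤ ∫ x in 0..T, g x :=
        intervalIntegral.integral_mono_on hT (hfT.sub intervalIntegrable_const) hgT
          fun x _ => hfg x
    _ = ∫ x in Ioc 0 T, g x := intervalIntegral.integral_of_le hT
    _ ≤ ∫ x in Ioi 0, g x :=
        setIntegral_mono_set hg (Eventually.of_forall hg0) (Eventually.of_forall hIoc)

lemma exists_pos_integral_Ioi_sub_le {f : ℝ → ℝ} (hf : IntegrableOn f (Ioi 0)) {ε : ℝ}
    (hε : 0 < ε) : ∃ η > 0, ∀ g : ℝ → ℝ, IntegrableOn g (Ioi 0) → (∀ x, 0 ≤ g x) →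
      (∀ x, f x - η ≤ g x) → (∫ x in Ioi 0, f x) - ε ≤ ∫ x in Ioi 0, g x := by
  obtain ⟨T, hT0, hT⟩ := exists_integral_Ioi_sub_le_intervalIntegral hf (half_pos hε)
  refine ⟨ε / 2 / (T + 1), by positivity, fun g hg hg0 hfg => ?_⟩
  have hηT : ε / 2 / (T + 1) * T ≤ ε / 2 := by
    rw [div_mul_eq_mul_div, div_le_iff₀ (by positivity)]
    nlinarith
  linarith [intervalIntegral_sub_mul_le_integral_Ioi hf hg hg0 hfg hT0]

lemma tendsto_sqrt_div_two_mul_atTop (c : ℝ) :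
    Tendsto (fun k : ℕ => √(c / (2 * k))) atTop (𝓝 0) := by
  have hdiv : Tendsto (fun k : ℕ => c / 2 / k) atTop (𝓝 0) :=
    tendsto_const_div_atTop_nhds_zero_nat _
  simpa only [div_div, Real.sqrt_zero] using hdiv.sqrt

lemma one_sub_min_add_one_mem_Icc {s b χ : ℝ} (hs : 0 ≤ s) (hb : |b - (1 - s)| ≤ χ) :
    1 - min (b + χ) 1 ∈ Icc (s - 2 * χ) s := by
  have := abs_le.1 hb
  constructor <;> cases min_cases (b + χ) 1 <;> linarith

theorem dkw_e_lower_limit_pac_general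
    (μ : Measure ℝ) [IsProbabilityMeasure μ] (hμ : μ (Set.Iio 0) = 0)
    (F : ℝ → ℝ) (hF : ∀ x, F x = (μ (Set.Iic x)).toReal)
    (hint : Integrable (fun x : ℝ => x) μ)
    (M : ℝ) (hM : M = ∫ x, x ∂μ)
    (δ : ℝ)
    (χ : ℕ → ℝ) (hχ : ∀ k : ℕ, 1 ≤ k → χ k = Real.sqrt (Real.log (2 / δ) / (2 * k)))
    (ε : ℝ) (hε : 0 < ε) :
    ∃ k₀ : ℕ, 1 ≤ k₀ ∧ ∀ k : ℕ, k₀ ≤ k →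
      ∀ G : ℝ → ℝ, Monotone G → (∀ x, 0 ≤ G x) → (∀ x, G x ≤ 1) →
        (∀ x : ℝ, x < 0 → G x = 0) →
        (∀ x : ℝ, |G x - F x| ≤ χ k) →
        M - ε ≤ (∫ x in Set.Ioi (0 : ℝ), (1 - min (G x + χ k) 1))
          ∧ (∫ x in Set.Ioi (0 : ℝ), (1 - min (G x + χ k) 1)) ≤ M := by
  have hnonneg : ∀ᵐ x ∂μ, 0 ≤ x := by
    rw [ae_iff]
    simp only [not_le]
    exact hμ
  have hS := integrableOn_measureReal_Ioi hnonneg hint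
  have hMS : M = ∫ t in Ioi 0, μ.real (Ioi t) := hM ▸ hint.integral_eq_integral_meas_lt hnonneg
  have hFS : ∀ t, F t = 1 - μ.real (Ioi t) := fun t => by
    rw [hF, ← compl_Iic, measureReal_compl measurableSet_Iic, probReal_univ, measureReal_def]
    ring
  obtain ⟨η, hη, hstable⟩ := exists_pos_integral_Ioi_sub_le hS hε
  have hχ_small : ∀ᶠ k in atTop, 1 ≤ k ∧ 2 * χ k < η := by
    filter_upwards [eventually_ge_atTop 1, (tendsto_sqrt_div_two_mul_atTop (Real.log (2 / δ))).eventually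
      (gt_mem_nhds (half_pos hη))] with k hk hsmall
    exact ⟨hk, by linarith [hχ k hk]⟩
  obtain ⟨k₀, hk₀⟩ := eventually_atTop.1 hχ_small
  refine ⟨k₀, (hk₀ k₀ le_rfl).1, fun k hk G hG _ _ _ hGF => ?_⟩
  have hband x := one_sub_min_add_one_mem_Icc measureReal_nonneg (hFS x ▸ hGF x)
  have hL : IntegrableOn (fun x => 1 - min (G x + χ k) 1) (Ioi 0) := by
    refine hS.mono' ((measurable_const.sub ((hG.measurable.add_const _).min
      measurable_const)).aestronglyMeasurable) (Eventually.of_forall fun x => ?_)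
    rw [Real.norm_of_nonneg (sub_nonneg.2 (min_le_right _ _))]
    exact (hband x).2
  refine ⟨?_, hMS ▸ setIntegral_mono hL hS fun x => (hband x).2⟩
  exact hMS ▸ hstable _ hL (fun x => sub_nonneg.2 (min_le_right _ _))
    fun x => by linarith [(hband x).1, (hk₀ k hk).2]

/-- Deterministic core of the limit-PAC theorem for DKW-E-Lower: for every `ε > 0`
there is `k₀ ≥ 1` such that for every `k ≥ k₀` and every empirical cdf `G` uniformly
`χ_k`-close to the true cdf `F`, the lower-band survival integral `L` satisfies
`M − ε ≤ L ≤ M`. -/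
theorem dkw_e_lower_limit_pac
    (μ : Measure ℝ) [IsProbabilityMeasure μ] (hμ : μ (Set.Iio 0) = 0)
    (F : ℝ → ℝ) (hF : ∀ x, F x = (μ (Set.Iic x)).toReal)
    (hint : Integrable (fun x : ℝ => x) μ)
    (M : ℝ) (hM : M = ∫ x, x ∂μ)
    (δ : ℝ) (hδ0 : 0 < δ) (hδ1 : δ < 1)
    (χ : ℕ → ℝ) (hχ : ∀ k : ℕ, 1 ≤ k → χ k = Real.sqrt (Real.log (2 / δ) / (2 * k)))
    (ε : ℝ) (hε : 0 < ε) :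
    ∃ k₀ : ℕ, 1 ≤ k₀ ∧ ∀ k : ℕ, k₀ ≤ k →
      ∀ G : ℝ → ℝ, Monotone G → (∀ x, 0 ≤ G x) → (∀ x, G x ≤ 1) →
        (∀ x : ℝ, x < 0 → G x = 0) →
        (∀ x : ℝ, |G x - F x| ≤ χ k) →
        M - ε ≤ (∫ x in Set.Ioi (0 : ℝ), (1 - min (G x + χ k) 1))
          ∧ (∫ x in Set.Ioi (0 : ℝ), (1 - min (G x + χ k) 1)) ≤ M :=
  dkw_e_lower_limit_pac_general μ hμ F hF hint M hM δ χ hχ ε hε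
end
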